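/- arXiv:0912.5264 — 2 statements merged into one kernel-verified Lean document; each statement's English description precedes it below -/
import Mathlib

section
/- Let h, h' ∈ ℝ^d and let w ∈ ℝ^d be a point lying on both H(h) and H(h'). Then w does NOT lie in the stable intersection of H(h) and H(h') if and only if type_h(w) = type_{h'}(w) and this common type has exactly two elements. -/
noncomputable section

/-- The type of `w` with respect to `h`: the set of indices at which the minimum of
`h i + w i` is attained. -/
def typeSet {d : ℕ} (h w : Fin d → ℝ) : Set (Fin d) :=
  {i | ∀ j, h i + w i ≤ h j + w j}

/-- `w` lies on the tropical hyperplane defined by `h`: the minimum of `h i + w i`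
is attained at least twice. -/
def MemTropHyp {d : ℕ} (h w : Fin d → ℝ) : Prop :=
  ∃ i j : Fin d, i ≠ j ∧ i ∈ typeSet h w ∧ j ∈ typeSet h w

/-- `w` lies in the stable intersection of the tropical hyperplanes defined by `h` and `h'`:
for every `ε > 0` there is `δ > 0` such that for every `v` with `‖v‖∞ < δ` there is a point
`w̃ ∈ H(h) ∩ (H(h') + v)` with `‖w̃ - w‖∞ < ε`.  (The norm on `Fin d → ℝ` is the sup norm.) -/
def StableMem {d : ℕ} (h h' w : Fin d → ℝ) : Prop :=
  ∀ ε > (0 : ℝ), ∃ δ > (0 : ℝ), ∀ v : Fin d → ℝ, ‖v‖ < δ →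
    ∃ wt : Fin d → ℝ, MemTropHyp h wt ∧ MemTropHyp h' (wt - v) ∧ ‖wt - w‖ < ε


lemma abs_le_norm' {d : ℕ} (v : Fin d → ℝ) (i : Fin d) : |v i| ≤ ‖v‖ := by
  simpa [Real.norm_eq_abs] using norm_le_pi_norm v i

lemma exists_gap {d : ℕ} (S : Set (Fin d)) (f : Fin d → ℝ) (m : ℝ)
    (hm : ∀ j, j ∉ S → m < f j) : ∃ δ > 0, ∀ j, j ∉ S → m + δ ≤ f j := by
  classical
  set F := Finset.univ.filter (fun j : Fin d => j ∉ S) with hF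
  by_cases hne : F.Nonempty
  · refine ⟨F.inf' hne (fun j => f j - m), ?_, ?_⟩
    · rw [gt_iff_lt, Finset.lt_inf'_iff]
      intro j hj
      have := hm j (by simpa [hF] using hj)
      linarith
    · intro j hj
      have h1 : F.inf' hne (fun j => f j - m) ≤ f j - m :=
        Finset.inf'_le _ (by simp [hF, hj])
      linarith
  · exact ⟨1, one_pos, fun j hj => absurd ⟨j, by simp [hF, hj]⟩ hne⟩

/-- `u` is a good perturbation for sets `S`, `S'` and shift `v`. -/
def GoodU {d : ℕ} (S S' : Set (Fin d)) (v u : Fin d → ℝ) : Prop :=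
  ‖u‖ ≤ 3 * ‖v‖ ∧
  (∃ a b, a ≠ b ∧ a ∈ S ∧ b ∈ S ∧ u a = u b ∧ ∀ i ∈ S, u a ≤ u i) ∧
  (∃ a b, a ≠ b ∧ a ∈ S' ∧ b ∈ S' ∧ u a - v a = u b - v b ∧
    ∀ i ∈ S', u a - v a ≤ u i - v i)

/-- Construction with a pair of `S'` outside `S`. -/
lemma goodU_disjoint {d : ℕ} (S S' : Set (Fin d)) (v : Fin d → ℝ)
    (a b a' b' : Fin d) (hab : a ≠ b) (haS : a ∈ S) (hbS : b ∈ S)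
    (ha'b' : a' ≠ b') (ha' : a' ∈ S') (hb' : b' ∈ S')
    (ha'S : a' ∉ S) (hb'S : b' ∉ S) :
    ∃ u, GoodU S S' v u := by
  classical
  set u : Fin d → ℝ :=
    fun i => if i = a' then v a' - 2 * ‖v‖ else if i = b' then v b' - 2 * ‖v‖ else 0 with hu
  have hval : ∀ i, i ≠ a' → i ≠ b' → u i = 0 := by
    intro i h1 h2; simp [hu, h1, h2]
  have hua' : u a' = v a' - 2 * ‖v‖ := by simp [hu]
  have hub' : u b' = v b' - 2 * ‖v‖ := by simp [hu, ha'b'.symm]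
  have hvn : (0:ℝ) ≤ ‖v‖ := norm_nonneg v
  refine ⟨u, ?_, ?_, ?_⟩
  · rw [pi_norm_le_iff_of_nonneg (by linarith)]
    intro i
    rw [Real.norm_eq_abs]
    by_cases h1 : i = a'
    · rw [h1, hua']
      have hh := abs_le_norm' v a'
      rw [abs_le] at hh ⊢; exact ⟨by linarith [hh.1], by linarith [hh.2]⟩
    · by_cases h2 : i = b'
      · rw [h2, hub']
        have hh := abs_le_norm' v b'
        rw [abs_le] at hh ⊢; exact ⟨by linarith [hh.1], by linarith [hh.2]⟩
      · rw [hval i h1 h2]; simpa using by linarith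
  · refine ⟨a, b, hab, haS, hbS, ?_, ?_⟩
    · rw [hval a (fun hh => ha'S (hh ▸ haS)) (fun hh => hb'S (hh ▸ haS)),
        hval b (fun hh => ha'S (hh ▸ hbS)) (fun hh => hb'S (hh ▸ hbS))]
    · intro i hi
      rw [hval a (fun hh => ha'S (hh ▸ haS)) (fun hh => hb'S (hh ▸ haS)),
        hval i (fun hh => ha'S (hh ▸ hi)) (fun hh => hb'S (hh ▸ hi))]
  · refine ⟨a', b', ha'b', ha', hb', by rw [hua', hub']; ring, ?_⟩
    intro i hi
    rw [hua']
    by_cases h1 : i = a'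
    · rw [h1, hua']
    · by_cases h2 : i = b'
      · rw [h2, hub']; ring_nf; exact le_refl _
      · rw [hval i h1 h2]
        have := abs_le_norm' v i
        rw [abs_le] at this
        linarith [this.1]
/-- Construction with a shared index `b ∈ S ∩ S'`. -/
lemma goodU_shared {d : ℕ} (S S' : Set (Fin d)) (v : Fin d → ℝ)
    (a b a' : Fin d) (hab : a ≠ b) (ha'b : a' ≠ b) (haa' : a ≠ a')
    (haS : a ∈ S) (hbS : b ∈ S) (hbS' : b ∈ S') (ha'S' : a' ∈ S')
    (h1 : a ∈ S' → v a ≤ v b) (h2 : a' ∈ S → v b ≤ v a') :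
    ∃ u, GoodU S S' v u := by
  classical
  set u : Fin d → ℝ :=
    fun i => if i = a ∨ i = b then 0 else if i = a' then v a' - v b else 2 * ‖v‖ with hu
  have hua : u a = 0 := by simp [hu]
  have hub : u b = 0 := by simp [hu]
  have hua' : u a' = v a' - v b := by simp [hu, haa'.symm, ha'b]
  have hdef : ∀ i, ¬(i = a ∨ i = b) → i ≠ a' → u i = 2 * ‖v‖ := by
    intro i hi1 hi2; simp [hu, hi1, hi2]
  have hvn : (0:ℝ) ≤ ‖v‖ := norm_nonneg v
  refine ⟨u, ?_, ?_, ?_⟩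
  · rw [pi_norm_le_iff_of_nonneg (by linarith)]
    intro i
    rw [Real.norm_eq_abs]
    by_cases hi1 : i = a ∨ i = b
    · have : u i = 0 := by simp [hu, hi1]
      rw [this]; simpa using by linarith
    · by_cases hi2 : i = a'
      · rw [hi2, hua']
        have g1 := abs_le_norm' v a'
        have g2 := abs_le_norm' v b
        rw [abs_le] at g1 g2 ⊢
        exact ⟨by linarith [g1.1, g2.2], by linarith [g1.2, g2.1]⟩
      · rw [hdef i hi1 hi2]
        rw [abs_le]; constructor <;> linarith
  · refine ⟨a, b, hab, haS, hbS, by rw [hua, hub], ?_⟩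
    intro i hi
    rw [hua]
    by_cases hi1 : i = a ∨ i = b
    · have : u i = 0 := by simp [hu, hi1]
      rw [this]
    · by_cases hi2 : i = a'
      · rw [hi2, hua']
        have := h2 (hi2 ▸ hi)
        linarith
      · rw [hdef i hi1 hi2]; linarith
  · refine ⟨a', b, ha'b, ha'S', hbS', by rw [hua', hub]; ring, ?_⟩
    intro i hi
    rw [hua']
    have gb := abs_le_norm' v b
    rw [abs_le] at gb
    by_cases hia : i = a
    · rw [hia, hua]
      have := h1 (hia ▸ hi)
      linarith
    · by_cases hib : i = b
      · rw [hib, hub]; ring_nf; exact le_refl _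
      · by_cases hi2 : i = a'
        · rw [hi2, hua']
        · rw [hdef i (by simp [hia, hib]) hi2]
          have gi := abs_le_norm' v i
          rw [abs_le] at gi
          linarith [gi.2]
/-- A good perturbation exists unless `S = S'` is a two-element set. -/
lemma exists_goodU {d : ℕ} (S S' : Set (Fin d)) (v : Fin d → ℝ)
    (hS : ∃ a b, a ≠ b ∧ a ∈ S ∧ b ∈ S)
    (hS' : ∃ a b, a ≠ b ∧ a ∈ S' ∧ b ∈ S')
    (hne : S ≠ S' ∨ ∀ a b : Fin d, a ≠ b → S ≠ {a, b}) :
    ∃ u, GoodU S S' v u := by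
  classical
  obtain ⟨p, q, hpq, hpS, hqS⟩ := hS
  obtain ⟨x, y, hxy, hxS', hyS'⟩ := hS'
  by_cases h1 : ∃ a' b' : Fin d, a' ≠ b' ∧ a' ∈ S' ∧ b' ∈ S' ∧ a' ∉ S ∧ b' ∉ S
  · obtain ⟨a', b', hd1, hd2, hd3, hd4, hd5⟩ := h1
    exact goodU_disjoint S S' v p q a' b' hpq hpS hqS hd1 hd2 hd3 hd4 hd5
  · have hT : ∃ t, t ∈ S ∧ t ∈ S' := by
      by_cases hx : x ∈ S
      · exact ⟨x, hx, hxS'⟩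
      · by_cases hy : y ∈ S
        · exact ⟨y, hy, hyS'⟩
        · exact absurd ⟨x, y, hxy, hxS', hyS', hx, hy⟩ h1
    set F := Finset.univ.filter (fun i : Fin d => i ∈ S ∧ i ∈ S') with hF
    have hFne : F.Nonempty := by
      obtain ⟨t, ht1, ht2⟩ := hT; exact ⟨t, by simp [hF, ht1, ht2]⟩
    obtain ⟨b, hbF, hbmin⟩ := F.exists_min_image v hFne
    have hbS : b ∈ S := (by simpa [hF] using hbF : b ∈ S ∧ b ∈ S').1
    have hbS' : b ∈ S' := (by simpa [hF] using hbF : b ∈ S ∧ b ∈ S').2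
    by_cases h2 : ∃ a, a ∈ S ∧ a ∉ S'
    · obtain ⟨a, haS, haS'⟩ := h2
      set a' := if x = b then y else x with ha'
      have ha'S' : a' ∈ S' := by
        by_cases hxb : x = b <;> simp [ha', hxb, hxS', hyS']
      have ha'b : a' ≠ b := by
        by_cases hxb : x = b
        · simpa [ha', hxb] using fun hc => hxy (hxb.trans hc.symm)
        · simpa [ha', hxb] using hxb
      refine goodU_shared S S' v a b a' (fun hc => haS' (hc ▸ hbS')) ha'b
        (fun hc => haS' (hc ▸ ha'S')) haS hbS hbS' ha'S'
        (fun hc => absurd hc haS') ?_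
      intro ha'S
      exact hbmin a' (by simp [hF, ha'S, ha'S'])
    · have hsub : S ⊆ S' := fun i hi => by_contra fun hc => h2 ⟨i, hi, hc⟩
      by_cases h3 : ∃ c, c ∈ S' ∧ c ∉ S
      · obtain ⟨c, hcS', hcS⟩ := h3
        set b0 := if p = b then q else p with hb0
        have hb0S : b0 ∈ S := by
          by_cases hpb : p = b <;> simp [hb0, hpb, hpS, hqS]
        have hb0b : b0 ≠ b := by
          by_cases hpb : p = b
          · simpa [hb0, hpb] using fun hc' => hpq (hpb.trans hc'.symm)
          · simpa [hb0, hpb] using hpb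
        refine goodU_shared S S' v b b0 c hb0b.symm
          (fun hc' => hcS (hc' ▸ hb0S)) (fun hc' => hcS (hc' ▸ hbS))
          hbS hb0S (hsub hb0S) hcS' ?_ (fun hc' => absurd hc' hcS)
        intro _
        exact hbmin b0 (by simp [hF, hb0S, hsub hb0S])
      · have hsub' : S' ⊆ S := fun i hi => by_contra fun hc => h3 ⟨i, hi, hc⟩
        have hSS : S = S' := le_antisymm hsub hsub'
        have h3elt : ∀ a b : Fin d, a ≠ b → S ≠ {a, b} :=
          hne.resolve_left (by simp [hSS])
        have hex : ∃ c, c ∈ S ∧ c ≠ p ∧ c ≠ q := by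
          by_contra hc
          push_neg at hc
          apply h3elt p q hpq
          ext i
          simp only [Set.mem_insert_iff, Set.mem_singleton_iff]
          constructor
          · intro hi
            by_cases h4 : i = p
            · exact Or.inl h4
            · by_cases h5 : i = q
              · exact Or.inr h5
              · exact absurd (hc i hi h4) (by simpa using h5)
          · rintro (rfl | rfl) <;> assumption
        obtain ⟨c, hcS, hcp, hcq⟩ := hex
        have key : ∀ x1 x2 x3 : Fin d, x1 ≠ x2 → x1 ≠ x3 → x2 ≠ x3 →
            x1 ∈ S → x2 ∈ S → x3 ∈ S → v x1 ≤ v x2 → v x2 ≤ v x3 →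
            ∃ u, GoodU S S' v u := by
          intro x1 x2 x3 h12 h13 h23 m1 m2 m3 le12 le23
          exact goodU_shared S S' v x1 x2 x3 h12 h23.symm h13 m1 m2
            (hSS ▸ m2) (hSS ▸ m3) (fun _ => le12) (fun _ => le23)
        rcases le_total (v p) (v q) with h4 | h4
        · rcases le_total (v q) (v c) with h5 | h5
          · exact key p q c hpq hcp.symm hcq.symm hpS hqS hcS h4 h5
          · rcases le_total (v p) (v c) with h6 | h6
            · exact key p c q hcp.symm hpq hcq hpS hcS hqS h6 h5
            · exact key c p q hcp hcq hpq hcS hpS hqS h6 h4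
        · rcases le_total (v p) (v c) with h5 | h5
          · exact key q p c hpq.symm hcq.symm hcp.symm hqS hpS hcS h4 h5
          · rcases le_total (v q) (v c) with h6 | h6
            · exact key q c p hcq.symm hpq.symm hcp hqS hcS hpS h6 h5
            · exact key c q p hcq hcp hpq.symm hcS hqS hpS h6 h4
lemma typeSet_eq_val {d : ℕ} (h w : Fin d → ℝ) {i j : Fin d}
    (hi : i ∈ typeSet h w) (hj : j ∈ typeSet h w) :
    h i + w i = h j + w j :=
  le_antisymm (hi j) (hj i)

lemma typeSet_gap {d : ℕ} (h w : Fin d → ℝ) {a : Fin d}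
    (ha : a ∈ typeSet h w) :
    ∃ δ > 0, ∀ j, j ∉ typeSet h w → h a + w a + δ ≤ h j + w j := by
  have hm : ∀ j, j ∉ typeSet h w → h a + w a < h j + w j := by
    intro j hj
    simp only [typeSet, Set.mem_setOf_eq, not_forall, not_le] at hj
    obtain ⟨k, hk⟩ := hj
    exact lt_of_le_of_lt (ha k) hk
  obtain ⟨δ, hδ, hgap⟩ := exists_gap (typeSet h w) (fun j => h j + w j) (h a + w a) hm
  exact ⟨δ, hδ, hgap⟩

lemma stable_of_goodU {d : ℕ} (h h' w : Fin d → ℝ)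
    (hw : MemTropHyp h w) (hw' : MemTropHyp h' w)
    (hgood : ∀ v : Fin d → ℝ, ∃ u, GoodU (typeSet h w) (typeSet h' w) v u) :
    StableMem h h' w := by
  classical
  obtain ⟨a₀, b₀, hab₀, ha₀, hb₀⟩ := hw
  obtain ⟨a₀', b₀', hab₀', ha₀', hb₀'⟩ := hw'
  obtain ⟨δ₀, hδ₀, hgap⟩ := typeSet_gap h w ha₀
  obtain ⟨δ₀', hδ₀', hgap'⟩ := typeSet_gap h' w ha₀'
  intro ε hε
  refine ⟨min (min δ₀ δ₀') ε / 9, by positivity, ?_⟩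
  intro v hv
  obtain ⟨u, hun, ⟨a, b, hab, haS, hbS, huab, humin⟩,
    ⟨a', b', hab', haS', hbS', huab', humin'⟩⟩ := hgood v
  have hvn : (0:ℝ) ≤ ‖v‖ := norm_nonneg v
  have h9 : 9 * ‖v‖ < min (min δ₀ δ₀') ε := by linarith
  have hd1 : min (min δ₀ δ₀') ε ≤ δ₀ := le_trans (min_le_left _ _) (min_le_left _ _)
  have hd2 : min (min δ₀ δ₀') ε ≤ δ₀' := le_trans (min_le_left _ _) (min_le_right _ _)
  have hd3 : min (min δ₀ δ₀') ε ≤ ε := min_le_right _ _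
  have hub : ∀ i, |u i| ≤ 3 * ‖v‖ := by
    intro i
    have := abs_le_norm' u i
    linarith
  have hvb : ∀ i, |v i| ≤ ‖v‖ := abs_le_norm' v
  refine ⟨w + u, ?_, ?_, ?_⟩
  · -- MemTropHyp h (w + u)
    have key : ∀ x, x ∈ typeSet h w → u x = u a → x ∈ typeSet h (w + u) := by
      intro x hx hux j
      simp only [Pi.add_apply]
      by_cases hj : j ∈ typeSet h w
      · have h1 : h x + w x ≤ h j + w j := hx j
        have h2 : u a ≤ u j := humin j hj
        linarith
      · have h1 : h a₀ + w a₀ + δ₀ ≤ h j + w j := hgap j hj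
        have h2 : h x + w x = h a₀ + w a₀ := typeSet_eq_val h w hx ha₀
        have h3 := hub x
        have h4 := hub j
        rw [abs_le] at h3 h4
        have h5 : u j ≥ -(3 * ‖v‖) := h4.1
        have h6 : u x ≤ 3 * ‖v‖ := h3.2
        linarith
    exact ⟨a, b, hab, key a haS rfl, key b hbS huab.symm⟩
  · -- MemTropHyp h' (w + u - v)
    have hrw : w + u - v = w + (u - v) := by abel
    rw [hrw]
    have key : ∀ x, x ∈ typeSet h' w → u x - v x = u a' - v a' →
        x ∈ typeSet h' (w + (u - v)) := by
      intro x hx hux j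
      simp only [Pi.add_apply, Pi.sub_apply]
      by_cases hj : j ∈ typeSet h' w
      · have h1 : h' x + w x ≤ h' j + w j := hx j
        have h2 : u a' - v a' ≤ u j - v j := humin' j hj
        linarith
      · have h1 : h' a₀' + w a₀' + δ₀' ≤ h' j + w j := hgap' j hj
        have h2 : h' x + w x = h' a₀' + w a₀' := typeSet_eq_val h' w hx ha₀'
        have h3 := hub x
        have h4 := hub j
        have h5 := hvb x
        have h6 := hvb j
        rw [abs_le] at h3 h4 h5 h6
        linarith [h3.2, h4.1, h5.1, h6.2]
    exact ⟨a', b', hab', key a' haS' rfl, key b' hbS' huab'.symm⟩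
  · have hrw : w + u - w = u := by abel
    rw [hrw]
    linarith
lemma not_stable_of_two {d : ℕ} (h h' w : Fin d → ℝ) (a b : Fin d) (hab : a ≠ b)
    (hS : typeSet h w = {a, b}) (hS' : typeSet h' w = {a, b}) :
    ¬ StableMem h h' w := by
  classical
  intro hst
  have haS : a ∈ typeSet h w := by rw [hS]; exact Set.mem_insert a {b}
  have hbS : b ∈ typeSet h w := by rw [hS]; exact Set.mem_insert_of_mem a rfl
  have haS' : a ∈ typeSet h' w := by rw [hS']; exact Set.mem_insert a {b}
  have hbS' : b ∈ typeSet h' w := by rw [hS']; exact Set.mem_insert_of_mem a rfl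
  obtain ⟨δ₀, hδ₀, hgap⟩ := typeSet_gap h w haS
  obtain ⟨δ₀', hδ₀', hgap'⟩ := typeSet_gap h' w haS'
  set ε := min δ₀ δ₀' / 4 with hε
  have hεpos : 0 < ε := by positivity
  have hε1 : 4 * ε ≤ δ₀ := by
    have := min_le_left δ₀ δ₀'; rw [hε]; linarith
  have hε2 : 4 * ε ≤ δ₀' := by
    have := min_le_right δ₀ δ₀'; rw [hε]; linarith
  obtain ⟨δ, hδ, hall⟩ := hst ε hεpos
  set η := min δ ε / 2 with hη
  have hηpos : 0 < η := by positivity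
  have hηδ : η < δ := by
    have := min_le_left δ ε; rw [hη]; linarith
  have hηε : η ≤ ε / 2 := by
    have := min_le_right δ ε; rw [hη]; linarith
  set v : Fin d → ℝ := fun i => if i = a then η else 0 with hv
  have hva : v a = η := by simp [hv]
  have hvb : v b = 0 := by simp [hv, hab.symm]
  have hvnorm : ‖v‖ ≤ η := by
    rw [pi_norm_le_iff_of_nonneg hηpos.le]
    intro i
    by_cases hi : i = a <;>
      simp [hv, hi, Real.norm_eq_abs, abs_of_nonneg hηpos.le, hηpos.le]
  obtain ⟨wt, hm1, hm2, hclose⟩ := hall v (lt_of_le_of_lt hvnorm hηδ)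
  have hwtw : ∀ i, |wt i - w i| ≤ ‖wt - w‖ := by
    intro i
    simpa [Pi.sub_apply] using abs_le_norm' (wt - w) i
  -- first hyperplane: type of wt is within {a, b}
  have hsub1 : ∀ k, k ∈ typeSet h wt → k = a ∨ k = b := by
    intro k hk
    by_contra hc
    push_neg at hc
    have hk' : k ∉ typeSet h w := by rw [hS]; simp [hc.1, hc.2]
    have g1 : h a + w a + δ₀ ≤ h k + w k := hgap k hk'
    have g2 := hwtw a
    have g3 := hwtw k
    rw [abs_le] at g2 g3
    have g4 : h k + wt k ≤ h a + wt a := hk a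
    linarith [g2.2, g3.1]
  obtain ⟨i, j, hij, hi, hj⟩ := hm1
  have hab1 : a ∈ typeSet h wt ∧ b ∈ typeSet h wt := by
    rcases hsub1 i hi with rfl | rfl <;> rcases hsub1 j hj with rfl | rfl
    · exact absurd rfl hij
    · exact ⟨hi, hj⟩
    · exact ⟨hj, hi⟩
    · exact absurd rfl hij
  have E1 : h a + wt a = h b + wt b := typeSet_eq_val h wt hab1.1 hab1.2
  -- second hyperplane
  set x := wt - v with hx
  have hxw : ∀ i, |x i - w i| ≤ ε + η := by
    intro i
    have h1 : ‖x - w‖ ≤ ‖wt - w‖ + ‖v‖ := by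
      have : x - w = (wt - w) - v := by rw [hx]; abel
      rw [this]; exact norm_sub_le _ _
    have h2 : |x i - w i| ≤ ‖x - w‖ := by
      simpa [Pi.sub_apply] using abs_le_norm' (x - w) i
    linarith
  have hsub2 : ∀ k, k ∈ typeSet h' x → k = a ∨ k = b := by
    intro k hk
    by_contra hc
    push_neg at hc
    have hk' : k ∉ typeSet h' w := by rw [hS']; simp [hc.1, hc.2]
    have g1 : h' a + w a + δ₀' ≤ h' k + w k := hgap' k hk'
    have g2 := hxw a
    have g3 := hxw k
    rw [abs_le] at g2 g3
    have g4 : h' k + x k ≤ h' a + x a := hk a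
    linarith [g2.2, g3.1]
  obtain ⟨i', j', hij', hi', hj'⟩ := hm2
  have hab2 : a ∈ typeSet h' x ∧ b ∈ typeSet h' x := by
    rcases hsub2 i' hi' with rfl | rfl <;> rcases hsub2 j' hj' with rfl | rfl
    · exact absurd rfl hij'
    · exact ⟨hi', hj'⟩
    · exact ⟨hj', hi'⟩
    · exact absurd rfl hij'
  have E2 : h' a + x a = h' b + x b := typeSet_eq_val h' x hab2.1 hab2.2
  have hxa : x a = wt a - η := by rw [hx]; simp [Pi.sub_apply, hva]
  have hxb : x b = wt b := by rw [hx]; simp [Pi.sub_apply, hvb]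
  have W1 : h a + w a = h b + w b := typeSet_eq_val h w haS hbS
  have W2 : h' a + w a = h' b + w b := typeSet_eq_val h' w haS' hbS'
  rw [hxa, hxb] at E2
  linarith

/-- A point `w` lying on both tropical hyperplanes `H(h)` and `H(h')` fails to lie in their
stable intersection if and only if its types with respect to `h` and `h'` coincide and
form a set of exactly two elements. -/
theorem not_stableMem_iff (d : ℕ) (h h' w : Fin d → ℝ)
    (hw : MemTropHyp h w) (hw' : MemTropHyp h' w) :
    ¬ StableMem h h' w ↔
      typeSet h w = typeSet h' w ∧ ∃ a b : Fin d, a ≠ b ∧ typeSet h w = {a, b} := by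
  constructor
  · intro hns
    by_contra hr
    apply hns
    apply stable_of_goodU h h' w hw hw'
    intro v
    apply exists_goodU (typeSet h w) (typeSet h' w) v hw hw'
    by_cases hSS : typeSet h w = typeSet h' w
    · right
      intro a b hab hcon
      exact hr ⟨hSS, a, b, hab, hcon⟩
    · left; exact hSS
  · rintro ⟨heq, a, b, hab, hS⟩
    exact not_stable_of_two h h' w a b hab hS (heq ▸ hS)
end
end

section
/- Let d ≥ 3 and let h, h' ∈ ℝ^d define tropical hyperplanes H(h), H(h') in ℝ^d. Then there exists a K-linear subspace L ⊆ K^d with dim_K L = d−2 such that the set {(val ℓ_1, …, val ℓ_d) : ℓ ∈ L with every coordinate ℓ_j ≠ 0} equals the set of points of ℝ^d lying in the stable intersection of H(h) and H(h'). -/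
noncomputable section

/-- The field of generalized power series over `ℂ` with real exponents and
well-ordered support. -/
abbrev K : Type := HahnSeries ℝ ℂ

/-!
Take `L` to be the kernel of the `2 × d` matrix with rows `(t ^ h j)` and `((j + 1) t ^ h' j)`.

Near `w`, the hyperplane `H(h)` is `w` plus the fan of vectors whose minimum over the type set
`T` of `w` is attained twice. So `w` lies in the stable intersection exactly when `T` and `T'`
have at least two elements each and at least three together: then moving one coordinate of a
small perturbation creates both ties, while for `T = T' = {i, j}` a shift in direction `i`
separates them.

For `ℓ ∈ L` the lowest-order terms of both equations cancel, so the valuation of `ℓ` lies on both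
hyperplanes, and the distinct constants `j + 1` rule out `T = T' = {i, j}`. Conversely, for such
a `w`, the cross products of the two rows on triples `(k, b, c)` with `b ∈ T`, `c ∈ T'`, suitably
rescaled, lie in `L`, have valuation at least `w`, and have valuation exactly `w k` at `k`; a
generic complex combination of them then has valuation exactly `w`.
-/

open Filter Topology HahnSeries

lemma Set.Nontrivial.eq_pair_of_subset {ι : Type*} {S : Set ι} {i j : ι} (hS : S.Nontrivial)
    (hij : S ⊆ {i, j}) : S = {i, j} := by
  rcases Set.subset_pair_iff_eq.mp hij with rfl | rfl | rfl | hS'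
  · exact absurd hS Set.not_nontrivial_empty
  · exact absurd hS Set.not_nontrivial_singleton
  · exact absurd hS Set.not_nontrivial_singleton
  · exact hS'

lemma Set.Nonempty.nontrivial_of_finsum_mem_eq_zero {ι M : Type*} [AddCommMonoid M] {S : Set ι}
    {g : ι → M} (hS : S.Nonempty) (hg : ∀ i ∈ S, g i ≠ 0) (hsum : ∑ᶠ i ∈ S, g i = 0) :
    S.Nontrivial := by
  by_contra hS'
  obtain ⟨i, rfl⟩ :=
    Set.exists_eq_singleton_iff_nonempty_subsingleton.2 ⟨hS, Set.not_nontrivial_iff.1 hS'⟩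
  exact hg i rfl (by rwa [finsum_mem_singleton] at hsum)

namespace StableIntersection

section MinSet

variable {ι : Type*}

def minSet (S : Set ι) (f : ι → ℝ) : Set ι :=
  {i | i ∈ S ∧ ∀ k ∈ S, f i ≤ f k}

lemma minSet_subset (S : Set ι) (f : ι → ℝ) : minSet S f ⊆ S := fun _ hi => hi.1

lemma minSet_nonempty [Finite ι] {S : Set ι} (hS : S.Nonempty) (f : ι → ℝ) :
    (minSet S f).Nonempty := by
  obtain ⟨i, hi, hmin⟩ := S.exists_min_image f S.toFinite hS
  exact ⟨i, hi, hmin⟩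

lemma eq_of_minSet_nontrivial {T : Set ι} {y : ι → ℝ} {i j : ι}
    (hy : (minSet T y).Nontrivial) (hT : T ⊆ {i, j}) : y i = y j := by
  have hij := hy.eq_pair_of_subset ((minSet_subset T y).trans hT)
  have hi : i ∈ minSet T y := hij ▸ Set.mem_insert i {j}
  have hj : j ∈ minSet T y := hij ▸ Set.mem_insert_of_mem i rfl
  exact le_antisymm (hi.2 j hj.1) (hj.2 i hi.1)

lemma eventually_minSet_add_eq [Finite ι] {S : Set ι} (hS : S.Nonempty) (f : ι → ℝ) :
    ∀ᶠ y in 𝓝 (0 : ι → ℝ), minSet S (f + y) = minSet (minSet S f) y := by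
  obtain ⟨i₀, hi₀S, hi₀⟩ := minSet_nonempty hS f
  have hgap : ∀ᶠ y in 𝓝 (0 : ι → ℝ), ∀ k ∈ S \ minSet S f, f i₀ + y i₀ < f k + y k := by
    refine eventually_all.2 fun k => ?_
    by_cases hk : k ∈ S \ minSet S f
    · have hlt : f i₀ < f k := by
        by_contra! hle
        exact hk.2 ⟨hk.1, fun l hl => hle.trans (hi₀ l hl)⟩
      have hcont : Continuous fun y : ι → ℝ => f k + y k - (f i₀ + y i₀) := by fun_prop
      filter_upwards [continuousAt_const.eventually_lt hcont.continuousAt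
        (show (0 : ℝ) < f k + (0 : ι → ℝ) k - (f i₀ + (0 : ι → ℝ) i₀) by simpa using hlt)]
        with y hy _
      linarith
    · exact Eventually.of_forall fun _ hk' => absurd hk' hk
  filter_upwards [hgap] with y hy
  ext i
  simp only [minSet, Set.mem_ofPred_eq, Pi.add_apply]
  constructor
  · rintro ⟨hiS, hi⟩
    have hiT : i ∈ minSet S f := by
      by_contra hiT
      linarith [hy i ⟨hiS, hiT⟩, hi i₀ hi₀S]
    exact ⟨hiT, fun k ⟨hkS, hk⟩ => by linarith [hi k hkS, hk i hiS, hiT.2 k hkS]⟩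
  · rintro ⟨⟨hiS, hi⟩, hiy⟩
    refine ⟨hiS, fun k hkS => ?_⟩
    by_cases hk : k ∈ minSet S f
    · linarith [hi k hkS, hiy k hk]
    · linarith [hy k ⟨hkS, hk⟩, hi₀ i hiS, hi i₀ hi₀S, hiy i₀ ⟨hi₀S, hi₀⟩]

end MinSet

section TypeSet

variable {d : ℕ}

lemma typeSet_eq_minSet (h w : Fin d → ℝ) : typeSet h w = minSet Set.univ (h + w) := by
  ext i
  simp [typeSet, minSet]

lemma typeSet_nonempty [NeZero d] (h w : Fin d → ℝ) : (typeSet h w).Nonempty := by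
  rw [typeSet_eq_minSet]
  exact minSet_nonempty Set.univ_nonempty _

lemma memTropHyp_iff_nontrivial {h w : Fin d → ℝ} :
    MemTropHyp h w ↔ (typeSet h w).Nontrivial :=
  ⟨fun ⟨i, j, hij, hi, hj⟩ => ⟨i, hi, j, hj, hij⟩, fun ⟨i, hi, j, hj, hij⟩ => ⟨i, j, hij, hi, hj⟩⟩

lemma eventually_typeSet_add_eq [NeZero d] (h w : Fin d → ℝ) :
    ∀ᶠ y in 𝓝 (0 : Fin d → ℝ), typeSet h (w + y) = minSet (typeSet h w) y := by
  filter_upwards [eventually_minSet_add_eq Set.univ_nonempty (h + w)] with y hy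
  rw [typeSet_eq_minSet, typeSet_eq_minSet, ← add_assoc, hy]

lemma exists_pos_forall_typeSet_add_eq [NeZero d] (h h' w : Fin d → ℝ) :
    ∃ ρ > 0, ∀ y : Fin d → ℝ, ‖y‖ < ρ → typeSet h (w + y) = minSet (typeSet h w) y ∧
      typeSet h' (w + y) = minSet (typeSet h' w) y := by
  simpa [Metric.eventually_nhds_iff, dist_zero_right] using
    (eventually_typeSet_add_eq h w).and (eventually_typeSet_add_eq h' w)

end TypeSet

section Perturbation

variable {ι : Type*}

/-- The condition on the type sets `T`, `T'` of `w` for `w` to lie in the stable intersection. -/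
def IsStablePair (T T' : Set ι) : Prop :=
  T.Nontrivial ∧ T'.Nontrivial ∧ ∀ i j, ¬ T ∪ T' ⊆ {i, j}

lemma nontrivial_diff_singleton_of_forall_not_subset_pair {S : Set ι}
    (hS : ∀ i j, ¬ S ⊆ {i, j}) (k : ι) : (S \ {k}).Nontrivial := by
  obtain ⟨a, haS, hak⟩ := Set.not_subset.mp (hS k k)
  obtain ⟨b, hbS, hb⟩ := Set.not_subset.mp (hS k a)
  simp only [Set.mem_insert_iff, Set.mem_singleton_iff, or_self, not_or] at hak hb
  exact ⟨a, ⟨haS, hak⟩, b, ⟨hbS, hb.1⟩, Ne.symm hb.2⟩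

lemma IsStablePair.exists_ne_ne {T T' : Set ι} (hTT' : IsStablePair T T') (k : ι) :
    ∃ b ∈ T, ∃ c ∈ T', b ≠ c ∧ b ≠ k ∧ c ≠ k := by
  obtain ⟨hT, hT', hU⟩ := hTT'
  obtain ⟨b, hbT, hbk⟩ := hT.exists_ne k
  obtain ⟨c, hcT', hck⟩ := hT'.exists_ne k
  by_cases hbc : b = c
  · subst hbc
    obtain ⟨r, hr, hr'⟩ := Set.not_subset.mp (hU b k)
    simp only [Set.mem_insert_iff, Set.mem_singleton_iff, not_or] at hr'
    rcases hr with hrT | hrT'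
    · exact ⟨r, hrT, b, hcT', hr'.1, hr'.2, hck⟩
    · exact ⟨b, hbT, r, hrT', Ne.symm hr'.1, hbk, hr'.2⟩
  · exact ⟨b, hbT, c, hcT', hbc, hbk, hck⟩

variable [Fintype ι] [DecidableEq ι]

/-- Moving the `k`-th coordinate of `v` onto the minimum of `v` over `T \ {k}` creates a tie
on `T`, while `y - v` is supported at `k` and, on `T'`, minimal off `k`. -/
lemma exists_minSet_nontrivial_of_mem {T T' : Set ι} {k : ι} (v : ι → ℝ) (hk : k ∈ T)
    (hT : (T \ {k}).Nonempty) (hT' : (T' \ {k}).Nontrivial)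
    (hkv : k ∈ T' → ∀ b ∈ T, v k ≤ v b) :
    ∃ y : ι → ℝ, (minSet T y).Nontrivial ∧ (minSet T' (y - v)).Nontrivial ∧ ‖y‖ ≤ ‖v‖ := by
  obtain ⟨a, ⟨haT, hak⟩, ha⟩ := (T \ {k}).exists_min_image v (Set.toFinite _) hT
  have hak : a ≠ k := hak
  set y := Function.update v k (v a) with hy
  have hyk : y k = v a := by simp [hy]
  have hyl : ∀ l ≠ k, y l = v l := fun l hl => by simp [hy, hl]
  have hya : y a = v a := hyl a hak
  have hmin : ∀ b ∈ T, v a ≤ y b := fun b hb => by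
    by_cases hbk : b = k
    · rw [hbk, hyk]
    · rw [hyl b hbk]; exact ha b ⟨hb, hbk⟩
  refine ⟨y, ⟨k, ⟨hk, hyk ▸ hmin⟩, a, ⟨haT, hya ▸ hmin⟩, hak.symm⟩, ?_, ?_⟩
  · refine hT'.mono fun j ⟨hjT', hjk⟩ => ⟨hjT', fun l hl => ?_⟩
    have hjk : j ≠ k := hjk
    rw [Pi.sub_apply, Pi.sub_apply, hyl j hjk, sub_self]
    by_cases hlk : l = k
    · subst hlk
      rw [hyk, sub_nonneg]
      exact hkv hl a haT
    · rw [hyl l hlk, sub_self]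
  · refine pi_norm_le_iff_of_nonneg (norm_nonneg v) |>.2 fun l => ?_
    by_cases hlk : l = k
    · rw [hlk, hyk]; exact norm_le_pi_norm v a
    · rw [hyl l hlk]; exact norm_le_pi_norm v l

/-- The local form of stability: every small translate of the local fan of `T'` meets the local
fan of `T`. -/
lemma IsStablePair.exists_minSet_nontrivial {T T' : Set ι} (hTT' : IsStablePair T T')
    (v : ι → ℝ) :
    ∃ y : ι → ℝ, (minSet T y).Nontrivial ∧ (minSet T' (y - v)).Nontrivial ∧ ‖y‖ ≤ 2 * ‖v‖ := by
  obtain ⟨hT, hT', hU⟩ := hTT'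
  by_cases hTT : ∃ k ∈ T, k ∉ T'
  · obtain ⟨k, hkT, hkT'⟩ := hTT
    obtain ⟨y, hy, hy', hyv⟩ := exists_minSet_nontrivial_of_mem v hkT (hT.exists_ne k)
      (by rwa [Set.sdiff_singleton_eq_self hkT']) (fun h => absurd h hkT')
    exact ⟨y, hy, hy', hyv.trans (by linarith [norm_nonneg v])⟩
  by_cases hT'T : ∃ k ∈ T', k ∉ T
  · obtain ⟨k, hkT', hkT⟩ := hT'T
    obtain ⟨y, hy, hy', hyv⟩ := exists_minSet_nontrivial_of_mem (-v) hkT' (hT'.exists_ne k)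
      (by rwa [Set.sdiff_singleton_eq_self hkT]) (fun h => absurd h hkT)
    refine ⟨y + v, by simpa using hy', by simpa using hy, ?_⟩
    calc ‖y + v‖ ≤ ‖y‖ + ‖v‖ := norm_add_le y v
      _ ≤ 2 * ‖v‖ := by rw [norm_neg] at hyv; linarith
  push Not at hTT hT'T
  have hTeq : T' = T := Set.Subset.antisymm hT'T hTT
  subst hTeq
  obtain ⟨k, hkT, hk⟩ := T'.exists_min_image v (Set.toFinite _) hT.nonempty
  obtain ⟨y, hy, hy', hyv⟩ := exists_minSet_nontrivial_of_mem v hkT (hT.exists_ne k)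
    (nontrivial_diff_singleton_of_forall_not_subset_pair (by simpa using hU) k)
    (fun _ => hk)
  exact ⟨y, hy, hy', hyv.trans (by linarith [norm_nonneg v])⟩

end Perturbation

section Stability

variable {d : ℕ} [NeZero d] {h h' w : Fin d → ℝ}

lemma eventually_exists_minSet_nontrivial_of_stableMem (hw : StableMem h h' w) :
    ∀ᶠ v in 𝓝 (0 : Fin d → ℝ), ∃ y : Fin d → ℝ,
      (minSet (typeSet h w) y).Nontrivial ∧ (minSet (typeSet h' w) (y - v)).Nontrivial := by
  obtain ⟨ρ, hρ, hloc⟩ := exists_pos_forall_typeSet_add_eq h h' w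
  obtain ⟨δ, hδ, hwδ⟩ := hw (ρ / 2) (half_pos hρ)
  filter_upwards [Metric.ball_mem_nhds 0 (lt_min hδ (half_pos hρ))] with v hv
  rw [Metric.mem_ball, dist_zero_right, lt_min_iff] at hv
  obtain ⟨wt, hwt, hwt', hwtw⟩ := hwδ v hv.1
  have hyv : ‖wt - w - v‖ < ρ := (norm_sub_le _ _).trans_lt (by linarith)
  refine ⟨wt - w, ?_, ?_⟩
  · rwa [← (hloc _ (by linarith)).1, add_sub_cancel, ← memTropHyp_iff_nontrivial]
  · rwa [← (hloc _ hyv).2, ← add_sub_assoc, add_sub_cancel, ← memTropHyp_iff_nontrivial]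

lemma isStablePair_of_stableMem (hw : StableMem h h' w) :
    IsStablePair (typeSet h w) (typeSet h' w) := by
  have hloc := eventually_exists_minSet_nontrivial_of_stableMem hw
  obtain ⟨y₀, hy₀, hy₀'⟩ := hloc.self_of_nhds
  have hT := hy₀.mono (minSet_subset _ _)
  refine ⟨hT, hy₀'.mono (minSet_subset _ _), fun i j hij => ?_⟩
  have hij' : i ≠ j := by
    rintro rfl
    exact hT.not_subsingleton
      (Set.subsingleton_singleton.anti (by simpa using Set.subset_union_left.trans hij))
  obtain ⟨δ, hδ, hδv⟩ := Metric.eventually_nhds_iff.1 hloc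
  obtain ⟨y, hy, hy'⟩ := hδv (y := Pi.single i (δ / 2))
    (by rw [dist_zero_right, Pi.norm_single, Real.norm_of_nonneg (by positivity)]; linarith)
  have h1 := eq_of_minSet_nontrivial hy (Set.subset_union_left.trans hij)
  have h2 := eq_of_minSet_nontrivial hy' (Set.subset_union_right.trans hij)
  simp only [Pi.sub_apply, Pi.single_eq_same, Pi.single_eq_of_ne hij'.symm] at h1 h2
  linarith

lemma stableMem_of_isStablePair (hw : IsStablePair (typeSet h w) (typeSet h' w)) :
    StableMem h h' w := by
  obtain ⟨ρ, hρ, hloc⟩ := exists_pos_forall_typeSet_add_eq h h' w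
  intro ε hε
  refine ⟨min ε ρ / 3, by positivity, fun v hv => ?_⟩
  have hvε : 3 * ‖v‖ < ε := by linarith [min_le_left ε ρ]
  have hvρ : 3 * ‖v‖ < ρ := by linarith [min_le_right ε ρ]
  obtain ⟨y, hy, hy', hyv⟩ := hw.exists_minSet_nontrivial v
  have hyv' : ‖y - v‖ < ρ := (norm_sub_le y v).trans_lt (by linarith)
  refine ⟨w + y, ?_, ?_, ?_⟩
  · rw [memTropHyp_iff_nontrivial, (hloc y (by linarith [norm_nonneg v])).1]
    exact hy
  · rw [add_sub_assoc, memTropHyp_iff_nontrivial, (hloc (y - v) hyv').2]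
    exact hy'
  · rw [add_sub_cancel_left]
    linarith [norm_nonneg v]

theorem stableMem_iff : StableMem h h' w ↔ IsStablePair (typeSet h w) (typeSet h' w) :=
  ⟨isStablePair_of_stableMem, stableMem_of_isStablePair⟩

end Stability

section CrossVec

variable {ι R : Type*} [CommRing R] [DecidableEq ι]

def minor (a b : ι → R) (i j : ι) : R :=
  a i * b j - a j * b i

/-- The cross product of the restrictions of `a` and `b` to the coordinates `i, j, k`, placed
back into those coordinates. -/
def crossVec (a b : ι → R) (i j k : ι) : ι → R :=
  Pi.single i (minor a b j k) + Pi.single j (minor a b k i) + Pi.single k (minor a b i j)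

lemma crossVec_apply_left (a b : ι → R) {i j k : ι} (hji : j ≠ i) (hki : k ≠ i) :
    crossVec a b i j k i = minor a b j k := by
  simp [crossVec, hji, hki]

variable [Fintype ι]

lemma dotProduct_crossVec_left (a b : ι → R) (i j k : ι) : a ⬝ᵥ crossVec a b i j k = 0 := by
  simp only [crossVec, minor, dotProduct_add, dotProduct_single]
  ring

lemma dotProduct_crossVec_right (a b : ι → R) (i j k : ι) : b ⬝ᵥ crossVec a b i j k = 0 := by
  simp only [crossVec, minor, dotProduct_add, dotProduct_single]
  ring

end CrossVec

section Coeff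

variable {Γ : Type*} [LinearOrder Γ]

lemma order_eq_of_coeff_ne_zero {R : Type*} [Zero Γ] [Zero R] {f : HahnSeries Γ R} {g : Γ}
    (hg : f.coeff g ≠ 0) (hlt : ∀ e < g, f.coeff e = 0) : f.order = g := by
  refine le_antisymm (order_le_of_coeff_ne_zero hg) (not_lt.mp fun hord => ?_)
  have hf : f ≠ 0 := by rintro rfl; simp at hg
  exact leadingCoeff_ne_zero.mpr hf (by rw [leadingCoeff_eq]; exact hlt _ hord)

lemma coeff_single_sub_single_ne_zero {R : Type*} [Ring R] {α β : Γ} {u v : R} (hu : u ≠ 0)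
    (huv : u ≠ v) : (single α u - single β v).coeff α ≠ 0 := by
  by_cases hβ : β = α
  · subst hβ; simpa [sub_eq_zero] using huv
  · simpa [coeff_single, Ne.symm hβ] using hu

end Coeff

section VanishBelow

variable {ι Γ R : Type*} [PartialOrder Γ] [Semiring R]

def coeffVanishBelow (x : ι → Γ) : Submodule R (ι → HahnSeries Γ R) :=
  Submodule.pi Set.univ fun k => ⨅ e < x k, LinearMap.ker (coeff.linearMap (R := R) e)

lemma mem_coeffVanishBelow {x : ι → Γ} {ℓ : ι → HahnSeries Γ R} :
    ℓ ∈ coeffVanishBelow x ↔ ∀ k, ∀ e < x k, (ℓ k).coeff e = 0 := by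
  simp [coeffVanishBelow]

end VanishBelow

section MonomialVec

variable {ι : Type*}

def monomialVec (e : ι → ℝ) (z : ι → ℂ) : ι → K :=
  fun j => single (e j) (z j)

lemma minor_monomialVec (e e' : ι → ℝ) (z z' : ι → ℂ) (i j : ι) :
    minor (monomialVec e z) (monomialVec e' z') i j =
      single (e i + e' j) (z i * z' j) - single (e j + e' i) (z j * z' i) := by
  simp [minor, monomialVec, single_mul_single]

lemma coeff_minor_monomialVec_eq_zero {e e' x : ι → ℝ} {m m' : ℝ} (hm : ∀ k, m ≤ e k + x k)
    (hm' : ∀ k, m' ≤ e' k + x k) (z z' : ι → ℂ) (i j : ι) {g : ℝ}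
    (hg : g < m + m' - x i - x j) :
    (minor (monomialVec e z) (monomialVec e' z') i j).coeff g = 0 := by
  have h1 : g ≠ e i + e' j := by linarith [hm i, hm' j]
  have h2 : g ≠ e j + e' i := by linarith [hm j, hm' i]
  simp [minor_monomialVec, h1, h2]

variable [DecidableEq ι]

lemma single_smul_piSingle_mem_coeffVanishBelow {x : ι → ℝ} {s : ℝ} {i : ι} {f : K}
    (hf : ∀ g < x i - s, f.coeff g = 0) :
    single s (1 : ℂ) • Pi.single i f ∈ coeffVanishBelow x := by
  rw [mem_coeffVanishBelow]
  intro k g hg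
  by_cases hki : k = i
  · subst hki
    simp [coeff_single_mul, hf (g - s) (by linarith)]
  · simp [hki]

lemma single_smul_crossVec_mem_coeffVanishBelow {e e' x : ι → ℝ} {m m' : ℝ}
    (hm : ∀ k, m ≤ e k + x k) (hm' : ∀ k, m' ≤ e' k + x k) (z z' : ι → ℂ) (i j k : ι) :
    single (x i + x j + x k - m - m') (1 : ℂ) •
      crossVec (monomialVec e z) (monomialVec e' z') i j k ∈ coeffVanishBelow x := by
  have hmin := coeff_minor_monomialVec_eq_zero hm hm' z z'
  -- `smul_add` does not unify with the `SMul K (ι → K)` instance elaborated in the statement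
  have hsplit : ∀ (c : K) (u v w : ι → K), c • (u + v + w) = c • u + c • v + c • w :=
    fun c u v w => by ext l : 1; simp [mul_add]
  rw [crossVec, hsplit]
  refine add_mem (add_mem ?_ ?_) ?_ <;>
    exact single_smul_piSingle_mem_coeffVanishBelow fun g hg => hmin _ _ (by linarith)

end MonomialVec

section LiftSubspace

variable {d : ℕ}

/-- Any pairwise distinct nonzero constants would do. -/
def rowCoeff (j : Fin d) : ℂ :=
  (j : ℂ) + 1

lemma rowCoeff_ne_zero (j : Fin d) : rowCoeff j ≠ 0 :=
  Nat.cast_add_one_ne_zero _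

lemma rowCoeff_injective : Function.Injective (rowCoeff (d := d)) := fun i j hij =>
  Fin.ext (Nat.cast_injective (add_right_cancel hij : ((i : ℕ) : ℂ) = j))

def liftMatrix (h h' : Fin d → ℝ) : Matrix (Fin 2) (Fin d) K :=
  Matrix.of ![monomialVec h 1, monomialVec h' rowCoeff]

def liftSubspace (h h' : Fin d → ℝ) : Submodule K (Fin d → K) :=
  LinearMap.ker (liftMatrix h h').mulVecLin

lemma mem_liftSubspace {h h' : Fin d → ℝ} {ℓ : Fin d → K} :
    ℓ ∈ liftSubspace h h' ↔
      monomialVec h 1 ⬝ᵥ ℓ = 0 ∧ monomialVec h' rowCoeff ⬝ᵥ ℓ = 0 := by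
  simp [liftSubspace, liftMatrix, funext_iff, Fin.forall_fin_two]

lemma crossVec_mem_liftSubspace (h h' : Fin d → ℝ) (i j k : Fin d) :
    crossVec (monomialVec h 1) (monomialVec h' rowCoeff) i j k ∈ liftSubspace h h' :=
  mem_liftSubspace.2 ⟨dotProduct_crossVec_left _ _ _ _ _, dotProduct_crossVec_right _ _ _ _ _⟩

lemma coeff_minor_ne_zero (h h' : Fin d → ℝ) {i j : Fin d} (hij : i ≠ j) :
    (minor (monomialVec h 1) (monomialVec h' rowCoeff) i j).coeff (h i + h' j) ≠ 0 := by
  rw [minor_monomialVec]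
  refine coeff_single_sub_single_ne_zero (by simpa using rowCoeff_ne_zero j) ?_
  simpa using rowCoeff_injective.ne hij.symm

lemma finrank_liftSubspace (hd : 2 ≤ d) (h h' : Fin d → ℝ) :
    Module.finrank K (liftSubspace h h') = d - 2 := by
  rw [liftSubspace]
  set A := liftMatrix h h'
  have hrank : A.rank = 2 := by
    refine le_antisymm ((Matrix.rank_le_card_height A).trans (by simp)) ?_
    let c : Fin 2 → Fin d := ![⟨0, by omega⟩, ⟨1, by omega⟩]
    have hdet : (A.submatrix id c).det ≠ 0 := by
      have h01 : c 0 ≠ c 1 := by simp [c]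
      rw [Matrix.det_fin_two]
      intro h0
      refine coeff_minor_ne_zero h h' h01 ?_
      simpa [A, liftMatrix, minor, c] using congrArg (coeff · (h (c 0) + h' (c 1))) h0
    calc 2 = (A.submatrix id c).rank := by
          rw [Matrix.rank_of_isUnit _ ((Matrix.isUnit_iff_isUnit_det _).2 hdet.isUnit)]; simp
      _ ≤ A.rank := Matrix.rank_submatrix_le A id c
  have := LinearMap.finrank_range_add_finrank_ker A.mulVecLin
  rw [← Matrix.rank, hrank, Module.finrank_fin_fun] at this
  omega

section Valuation

variable [NeZero d]

/-- The lowest-order terms of `∑ j, t ^ (e j) z j ℓ j = 0` cancel: they sit at the minimum of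
`e + val ℓ`, attained exactly on the type set. -/
lemma finsum_mem_typeSet_mul_leadingCoeff_eq_zero {e : Fin d → ℝ} {z : Fin d → ℂ}
    {ℓ : Fin d → K} (h : monomialVec e z ⬝ᵥ ℓ = 0) :
    ∑ᶠ j ∈ typeSet e (fun j => (ℓ j).order), z j * (ℓ j).leadingCoeff = 0 := by
  classical
  set x : Fin d → ℝ := fun j => (ℓ j).order
  obtain ⟨i₀, hi₀⟩ := typeSet_nonempty e x
  have hterm : ∀ j, (single (e j) (z j) * ℓ j).coeff (e i₀ + x i₀) =
      (typeSet e x).indicator (fun j => z j * (ℓ j).leadingCoeff) j := by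
    intro j
    rw [coeff_single_mul, Set.indicator_apply]
    split_ifs with hj
    · rw [show e i₀ + x i₀ - e j = x j by linarith [hj i₀, hi₀ j], leadingCoeff_eq]
    · obtain ⟨k, hk⟩ := not_forall.mp hj
      rw [coeff_eq_zero_of_lt_order (by linarith [hi₀ k, not_le.mp hk] : _ < x j), mul_zero]
  have hsum : ∑ j, single (e j) (z j) * ℓ j = 0 := h
  rw [finsum_mem_def, finsum_eq_sum_of_fintype, ← Finset.sum_congr rfl fun j _ => hterm j,
    ← coeff_sum, hsum, coeff_zero]

lemma isStablePair_of_mem_liftSubspace {h h' : Fin d → ℝ} {ℓ : Fin d → K}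
    (hℓ : ℓ ∈ liftSubspace h h') (hne : ∀ j, ℓ j ≠ 0) :
    IsStablePair (typeSet h fun j => (ℓ j).order) (typeSet h' fun j => (ℓ j).order) := by
  obtain ⟨hrow, hrow'⟩ := mem_liftSubspace.1 hℓ
  have E := finsum_mem_typeSet_mul_leadingCoeff_eq_zero hrow
  have E' := finsum_mem_typeSet_mul_leadingCoeff_eq_zero hrow'
  have hlc : ∀ j, (ℓ j).leadingCoeff ≠ 0 := fun j => leadingCoeff_ne_zero.2 (hne j)
  have hT := (typeSet_nonempty _ _).nontrivial_of_finsum_mem_eq_zero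
    (fun j _ => by simpa using hlc j) E
  have hT' := (typeSet_nonempty _ _).nontrivial_of_finsum_mem_eq_zero
    (fun j _ => mul_ne_zero (rowCoeff_ne_zero j) (hlc j)) E'
  refine ⟨hT, hT', fun i j hij => ?_⟩
  have hTij := hT.eq_pair_of_subset (Set.subset_union_left.trans hij)
  have hij' : i ≠ j := by
    rintro rfl
    simp [hTij] at hT
  rw [hTij, finsum_mem_pair hij'] at E
  rw [hT'.eq_pair_of_subset (Set.subset_union_right.trans hij), finsum_mem_pair hij'] at E'
  simp only [Pi.one_apply, one_mul] at E
  have hj : (rowCoeff j - rowCoeff i) * (ℓ j).leadingCoeff = 0 := by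
    linear_combination E' - rowCoeff i * E
  exact mul_ne_zero (sub_ne_zero.2 (rowCoeff_injective.ne hij'.symm)) (hlc j) hj

end Valuation

theorem exists_mem_liftSubspace_order_eq {h h' x : Fin d → ℝ}
    (hx : IsStablePair (typeSet h x) (typeSet h' x)) :
    ∃ ℓ ∈ liftSubspace h h', (∀ j, ℓ j ≠ 0) ∧ ∀ j, (ℓ j).order = x j := by
  -- instance search reaches `Algebra ℂ K` through `HahnSeries.powerSeriesAlgebra` and then
  -- misses this tower
  have : IsScalarTower ℂ K K := @IsScalarTower.right ℂ K _ _ HahnSeries.instAlgebra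
  have hgen : ∀ k, ∃ ℓ ∈ (liftSubspace h h').restrictScalars ℂ ⊓ coeffVanishBelow x,
      (ℓ k).coeff (x k) ≠ 0 := by
    intro k
    obtain ⟨b, hb, c, hc, hbc, hbk, hck⟩ := hx.exists_ne_ne k
    refine ⟨_, ⟨Submodule.smul_mem _ (single (x k + x b + x c - (h b + x b) - (h' c + x c)) 1)
      (crossVec_mem_liftSubspace h h' k b c),
      single_smul_crossVec_mem_coeffVanishBelow hb hc 1 rowCoeff k b c⟩, ?_⟩
    simp only [Pi.smul_apply, smul_eq_mul, crossVec_apply_left _ _ hbk hck, coeff_single_mul,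
      one_mul]
    rw [show x k - (x k + x b + x c - (h b + x b) - (h' c + x c)) = h b + h' c by ring]
    exact coeff_minor_ne_zero h h' hbc
  obtain ⟨ℓ, ⟨hℓL, hℓx⟩, hℓ⟩ := Module.Dual.exists_forall_mem_ne_zero_of_forall_exists _
    (fun k => (coeff.linearMap (x k)).comp (LinearMap.proj (R := ℂ) (φ := fun _ => K) k)) hgen
  have hvan := mem_coeffVanishBelow.1 hℓx
  exact ⟨ℓ, hℓL, fun j hj => hℓ j (by simp [hj]),
    fun j => order_eq_of_coeff_ne_zero (hℓ j) (hvan j)⟩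

end LiftSubspace

end StableIntersection

open StableIntersection

/-- For `d ≥ 3` and two tropical hyperplanes `H(h)`, `H(h')` in `ℝ^d`, there is a
`(d-2)`-dimensional `K`-linear subspace `L ⊆ K^d` whose coordinatewise valuation image
(over vectors of `L` with all coordinates nonzero) equals the stable intersection of
`H(h)` and `H(h')`. -/
theorem stable_intersection_has_lift (d : ℕ) (hd : 3 ≤ d) (h h' : Fin d → ℝ) :
    ∃ L : Submodule K (Fin d → K), Module.finrank K L = d - 2 ∧
      {x : Fin d → ℝ | ∃ ℓ ∈ L, (∀ j, ℓ j ≠ 0) ∧ ∀ j, (ℓ j).order = x j} =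
      {w : Fin d → ℝ | StableMem h h' w} := by
  have : NeZero d := ⟨by omega⟩
  refine ⟨liftSubspace h h', finrank_liftSubspace (by omega) h h',
    Set.ext fun x => ⟨?_, fun hx => exists_mem_liftSubspace_order_eq (stableMem_iff.1 hx)⟩⟩
  rintro ⟨ℓ, hℓ, hne, hord⟩
  exact stableMem_iff.2 (by simpa [funext hord] using isStablePair_of_mem_liftSubspace hℓ hne)
end
end
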